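/- arXiv:2201.00971 — 6 statements merged into one kernel-verified Lean document; each statement's English description precedes it below -/
import Mathlib

section
/- Weak triangle inequality for Rényi divergence: for pmfs P, Q, R on a finite type (with Q and R of full support) and α > 1, D_α(P‖Q) ≤ ((α − 1/2)/(α − 1)) · D_{2α}(P‖R) + D_{2α−1}(R‖Q). -/
open Finset Real

def IsPMF {V : Type*} [Fintype V] (P : V → ℝ) : Prop :=
  (∀ x, 0 ≤ P x) ∧ ∑ x, P x = 1

noncomputable def renyiD {V : Type*} [Fintype V] (α : ℝ) (P Q : V → ℝ) : ℝ :=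
  (α - 1)⁻¹ * Real.log (∑ x, Q x * (P x / Q x) ^ α)

/-!
The summand of `D_α(P‖Q)` factors as `Q (P/Q)^α = (P^α R^(1/2-α)) · (R^(α-1/2) Q^(1-α))`, and the
squares of the two factors are the summands of `D_{2α}(P‖R)` and `D_{2α-1}(R‖Q)`.  Cauchy–Schwarz
therefore gives `(∑ Q (P/Q)^α)² ≤ (∑ R (P/R)^{2α}) (∑ Q (R/Q)^{2α-1})`; taking logarithms and
dividing by `2(α - 1)` is the claim.
-/

lemma IsPMF.exists_pos {V : Type*} [Fintype V] {P : V → ℝ} (hP : IsPMF P) : ∃ x, 0 < P x := by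
  by_contra! h
  have hzero : ∑ x, P x = 0 := sum_eq_zero fun x _ => le_antisymm (h x) (hP.1 x)
  exact zero_ne_one (hzero.symm.trans hP.2)

lemma two_mul_log_le_log_add_log {a b c : ℝ} (ha : 0 < a) (h : a ^ 2 ≤ b * c) :
    2 * log a ≤ log b + log c := by
  have hbc : b * c ≠ 0 := (lt_of_lt_of_le (pow_pos ha 2) h).ne'
  have hlog := log_le_log (pow_pos ha 2) h
  rwa [log_pow, log_mul (left_ne_zero_of_mul hbc) (right_ne_zero_of_mul hbc)] at hlog

lemma mul_div_rpow_eq {p q : ℝ} (hp : 0 ≤ p) (hq : 0 < q) (a : ℝ) :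
    q * (p / q) ^ a = p ^ a * q ^ (1 - a) := by
  rw [div_rpow hp hq.le, rpow_sub hq, rpow_one]
  field_simp

lemma renyi_summand_sq_eq {p q r : ℝ} (hp : 0 ≤ p) (hq : 0 < q) (hr : 0 < r) (α : ℝ) :
    (q * (p / q) ^ α) ^ 2 = r * (p / r) ^ (2 * α) * (q * (r / q) ^ (2 * α - 1)) := by
  rw [mul_div_rpow_eq hp hq, mul_div_rpow_eq hp hr, mul_div_rpow_eq hr.le hq, mul_pow,
    ← rpow_mul_natCast hp, ← rpow_mul_natCast hq.le]
  have hr_cancel : r ^ (1 - 2 * α) * r ^ (2 * α - 1) = 1 := by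
    rw [← rpow_add hr, show 1 - 2 * α + (2 * α - 1) = 0 by ring, rpow_zero]
  rw [Nat.cast_ofNat, show (1 - α) * 2 = 1 - (2 * α - 1) by ring, mul_comm α 2]
  linear_combination (p ^ (2 * α) * q ^ (1 - (2 * α - 1))) * hr_cancel.symm

lemma renyi_sum_sq_le {V : Type*} [Fintype V] {P Q R : V → ℝ} (hP : ∀ x, 0 ≤ P x)
    (hQ : ∀ x, 0 < Q x) (hR : ∀ x, 0 < R x) (α : ℝ) :
    (∑ x, Q x * (P x / Q x) ^ α) ^ 2 ≤
      (∑ x, R x * (P x / R x) ^ (2 * α)) * ∑ x, Q x * (R x / Q x) ^ (2 * α - 1) :=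
  sum_sq_le_sum_mul_sum_of_sq_le_mul _
    (fun x _ => mul_nonneg (hR x).le (rpow_nonneg (div_nonneg (hP x) (hR x).le) _))
    (fun x _ => mul_nonneg (hQ x).le (rpow_nonneg (div_nonneg (hR x).le (hQ x).le) _))
    (fun x _ => (renyi_summand_sq_eq (hP x) (hQ x) (hR x) α).le)

lemma renyi_sum_pos {V : Type*} [Fintype V] {P Q : V → ℝ} (hP : IsPMF P) (hQ : ∀ x, 0 < Q x)
    (α : ℝ) : 0 < ∑ x, Q x * (P x / Q x) ^ α := by
  obtain ⟨x₀, hx₀⟩ := hP.exists_pos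
  exact sum_pos' (fun x _ => mul_nonneg (hQ x).le (rpow_nonneg (div_nonneg (hP.1 x) (hQ x).le) _))
    ⟨x₀, mem_univ _, mul_pos (hQ x₀) (rpow_pos_of_pos (div_pos hx₀ (hQ x₀)) _)⟩

theorem renyi_weak_triangle_general {V : Type*} [Fintype V]
    (P Q R : V → ℝ) (hP : IsPMF P)
    (hQpos : ∀ x, 0 < Q x) (hRpos : ∀ x, 0 < R x)
    {α : ℝ} (hα : 1 < α) :
    renyiD α P Q ≤ ((α - 1/2) / (α - 1)) * renyiD (2*α) P R + renyiD (2*α - 1) R Q := by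
  have hlog := two_mul_log_le_log_add_log (renyi_sum_pos hP hQpos α)
    (renyi_sum_sq_le hP.1 hQpos hRpos α)
  have hα₁ : 0 < α - 1 := by linarith
  have hα₂ : 2 * α - 1 ≠ 0 := by linarith
  have hcoeff : (α - 1 / 2) / (α - 1) * (2 * α - 1)⁻¹ = (2 * (α - 1))⁻¹ := by
    rw [show α - 1 / 2 = (2 * α - 1) / 2 by ring]
    field_simp
  unfold renyiD
  rw [← mul_assoc, hcoeff, show 2 * α - 1 - 1 = 2 * (α - 1) by ring, ← mul_add,
    show (α - 1)⁻¹ = (2 * (α - 1))⁻¹ * 2 by field_simp, mul_assoc]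
  exact mul_le_mul_of_nonneg_left hlog (by positivity)

/-- Weak triangle inequality for the Rényi divergence. -/
theorem renyi_weak_triangle {V : Type*} [Fintype V] [Nonempty V]
    (P Q R : V → ℝ) (hP : IsPMF P) (hQ : IsPMF Q) (hR : IsPMF R)
    (hQpos : ∀ x, 0 < Q x) (hRpos : ∀ x, 0 < R x)
    {α : ℝ} (hα : 1 < α) :
    renyiD α P Q ≤ ((α - 1/2) / (α - 1)) * renyiD (2*α) P R + renyiD (2*α - 1) R Q :=
  renyi_weak_triangle_general P Q R hP hQpos hRpos hα
end

section
/- Conversion from partition-level to user-level Rényi bounds via the weak triangle inequality: let α > 2 and suppose P, P', P'' are pmfs on a finite type (with full support) such that the symmetrized Rényi divergences satisfy D_α^sym(P‖P'') ≤ ε and D_α^sym(P'‖P'') ≤ ε, where D_α^sym(X‖Y) = max(D_α(X‖Y), D_α(Y‖X)). Then D_{α/2}(P‖P') ≤ ((2α − 3)/(α − 2)) · ε. -/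
open Finset Real

/-- Symmetrized Rényi divergence. -/
noncomputable def renyiDSym {V : Type*} [Fintype V] (α : ℝ) (P Q : V → ℝ) : ℝ :=
  max (renyiD α P Q) (renyiD α Q P)

/-
Cauchy–Schwarz applied to `y (x/y)^β = x^β y^{1-β} = (x^β z^{1/2-β}) · (z^{β-1/2} y^{1-β})` bounds
`(∑ y (x/y)^β)^2` by the product of the Rényi sums of order `2β` for `(x, z)` and of order `2β - 1`
for `(z, y)`; taking logarithms gives the weak triangle inequality
`D_β(x‖y) ≤ ((β - 1/2)/(β - 1)) D_{2β}(x‖z) + D_{2β-1}(z‖y)`.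
With `β = α/2` and `z = P''` the first term is at most `(α - 1)/(α - 2) · ε`, and the second,
`D_{α-1}(P''‖P')`, is at most `D_α(P''‖P') ≤ ε` because `β ↦ D_β` is nondecreasing (Lyapunov's
inequality for the moments of `P''/P'` under `P''`).
-/

lemma mul_div_rpow_eq_rpow_mul_rpow {p q : ℝ} (hp : 0 ≤ p) (hq : 0 < q) (s : ℝ) :
    q * (p / q) ^ s = p ^ s * q ^ (1 - s) := by
  rw [div_rpow hp hq.le, rpow_sub hq, rpow_one]
  have := (rpow_pos_of_pos hq s).ne'
  field_simp

lemma mul_div_rpow_eq_mul_div_rpow_sub_one {p q : ℝ} (hp : 0 < p) (hq : 0 < q) (s : ℝ) :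
    q * (p / q) ^ s = p * (p / q) ^ (s - 1) := by
  rw [rpow_sub_one (div_pos hp hq).ne']
  field_simp

lemma sq_mul_div_rpow_eq_mul {x y z : ℝ} (hx : 0 < x) (hy : 0 < y) (hz : 0 < z) (β : ℝ) :
    (y * (x / y) ^ β) ^ 2 = z * (x / z) ^ (2 * β) * (y * (z / y) ^ (2 * β - 1)) := by
  simp only [mul_div_rpow_eq_rpow_mul_rpow hx.le hy, mul_div_rpow_eq_rpow_mul_rpow hx.le hz,
    mul_div_rpow_eq_rpow_mul_rpow hz.le hy]
  have hzz : z ^ (1 - 2 * β) * z ^ (2 * β - 1) = 1 := by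
    rw [← rpow_add hz]; norm_num
  calc (x ^ β * y ^ (1 - β)) ^ 2 = x ^ (2 * β) * y ^ (1 - (2 * β - 1)) := by
        rw [mul_pow, ← rpow_mul_natCast hx.le, ← rpow_mul_natCast hy.le]; ring_nf
    _ = x ^ (2 * β) * z ^ (1 - 2 * β) * (z ^ (2 * β - 1) * y ^ (1 - (2 * β - 1))) := by
        linear_combination x ^ (2 * β) * y ^ (1 - (2 * β - 1)) * hzz.symm

theorem monotoneOn_inv_mul_log_sum_mul_rpow {ι : Type*} (s : Finset ι) {w z : ι → ℝ}
    (hw : ∀ i ∈ s, 0 ≤ w i) (hw' : ∑ i ∈ s, w i = 1) (hz : ∀ i ∈ s, 0 < z i) :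
    MonotoneOn (fun a => a⁻¹ * log (∑ i ∈ s, w i * z i ^ a)) (Set.Ioi 0) := by
  intro a (ha : 0 < a) b _ hab
  have hsum_pos : ∀ c : ℝ, 0 < ∑ i ∈ s, w i * z i ^ c := by
    obtain ⟨j, hj, hwj⟩ := exists_ne_zero_of_sum_ne_zero (hw' ▸ one_ne_zero : ∑ i ∈ s, w i ≠ 0)
    exact fun c => sum_pos' (fun i hi => mul_nonneg (hw i hi) (rpow_pos_of_pos (hz i hi) c).le)
      ⟨j, hj, mul_pos (lt_of_le_of_ne (hw j hj) (Ne.symm hwj)) (rpow_pos_of_pos (hz j hj) c)⟩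
  have hpow : ∀ i ∈ s, (z i ^ a) ^ (b / a) = z i ^ b := fun i hi => by
    rw [← rpow_mul (hz i hi).le, mul_div_cancel₀ _ ha.ne']
  have hmean : ∑ i ∈ s, w i * z i ^ a ≤ (∑ i ∈ s, w i * z i ^ b) ^ (1 / (b / a)) := by
    have h := arith_mean_le_rpow_mean s w (fun i => z i ^ a) hw hw'
      (fun i hi => (rpow_pos_of_pos (hz i hi) a).le) ((one_le_div ha).mpr hab)
    rwa [sum_congr rfl fun i hi => congrArg (w i * ·) (hpow i hi)] at h
  have hlog := log_le_log (hsum_pos a) hmean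
  rw [log_rpow (hsum_pos b)] at hlog
  calc a⁻¹ * log (∑ i ∈ s, w i * z i ^ a)
      ≤ a⁻¹ * (1 / (b / a) * log (∑ i ∈ s, w i * z i ^ b)) :=
        mul_le_mul_of_nonneg_left hlog (inv_nonneg.mpr ha.le)
    _ = b⁻¹ * log (∑ i ∈ s, w i * z i ^ b) := by field_simp

section Renyi

variable {V : Type*} [Fintype V]

lemma renyiD_eq_inv_mul_log_sum_mul_rpow_sub_one {P Q : V → ℝ} (hP : ∀ x, 0 < P x)
    (hQ : ∀ x, 0 < Q x) (β : ℝ) :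
    renyiD β P Q = (β - 1)⁻¹ * log (∑ x, P x * (P x / Q x) ^ (β - 1)) := by
  simp only [renyiD, mul_div_rpow_eq_mul_div_rpow_sub_one (hP _) (hQ _)]

theorem renyiD_mono {P Q : V → ℝ} (hPm : IsPMF P) (hP : ∀ x, 0 < P x) (hQ : ∀ x, 0 < Q x)
    {a b : ℝ} (ha : 1 < a) (hab : a ≤ b) : renyiD a P Q ≤ renyiD b P Q := by
  rw [renyiD_eq_inv_mul_log_sum_mul_rpow_sub_one hP hQ,
    renyiD_eq_inv_mul_log_sum_mul_rpow_sub_one hP hQ]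
  exact monotoneOn_inv_mul_log_sum_mul_rpow univ (fun x _ => hPm.1 x) hPm.2
    (fun x _ => div_pos (hP x) (hQ x)) (sub_pos.mpr ha) (sub_pos.mpr (ha.trans_le hab))
    (by linarith)

lemma sum_mul_div_rpow_pos [Nonempty V] {P Q : V → ℝ} (hP : ∀ x, 0 < P x) (hQ : ∀ x, 0 < Q x)
    (β : ℝ) : 0 < ∑ x, Q x * (P x / Q x) ^ β :=
  sum_pos (fun x _ => mul_pos (hQ x) (rpow_pos_of_pos (div_pos (hP x) (hQ x)) β)) univ_nonempty

theorem renyiD_weak_triangle [Nonempty V] {X Y Z : V → ℝ} (hX : ∀ x, 0 < X x)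
    (hY : ∀ x, 0 < Y x) (hZ : ∀ x, 0 < Z x) {β : ℝ} (hβ : 1 < β) :
    renyiD β X Y ≤ ((β - 1 / 2) / (β - 1)) * renyiD (2 * β) X Z + renyiD (2 * β - 1) Z Y := by
  simp only [renyiD]
  set S := ∑ x, Y x * (X x / Y x) ^ β
  set A := ∑ x, Z x * (X x / Z x) ^ (2 * β)
  set B := ∑ x, Y x * (Z x / Y x) ^ (2 * β - 1)
  have hA := sum_mul_div_rpow_pos hX hZ (2 * β)
  have hB := sum_mul_div_rpow_pos hZ hY (2 * β - 1)
  have hCS : S ^ 2 ≤ A * B := sum_sq_le_sum_mul_sum_of_sq_le_mul univ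
    (fun x _ => (mul_pos (hZ x) (rpow_pos_of_pos (div_pos (hX x) (hZ x)) _)).le)
    (fun x _ => (mul_pos (hY x) (rpow_pos_of_pos (div_pos (hZ x) (hY x)) _)).le)
    (fun x _ => (sq_mul_div_rpow_eq_mul (hX x) (hY x) (hZ x) β).le)
  have hlog : 2 * log S ≤ log A + log B := by
    have h := log_le_log (pow_pos (sum_mul_div_rpow_pos hX hY β) 2) hCS
    rwa [log_pow, log_mul hA.ne' hB.ne', Nat.cast_ofNat] at h
  have hβ1 : 0 < β - 1 := sub_pos.mpr hβ
  have hcoeff : ((β - 1 / 2) / (β - 1)) * ((2 * β - 1)⁻¹ * log A) + (2 * β - 1 - 1)⁻¹ * log B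
      = (β - 1)⁻¹ * ((log A + log B) / 2) := by
    rw [show 2 * β - 1 - 1 = 2 * (β - 1) by ring, show β - 1 / 2 = (2 * β - 1) / 2 by ring]
    have : 2 * β - 1 ≠ 0 := by linarith
    field_simp
  rw [hcoeff]
  exact mul_le_mul_of_nonneg_left (by linarith) (inv_nonneg.mpr hβ1.le)

end Renyi

theorem partition_to_user_conversion_general {V : Type*} [Fintype V] [Nonempty V]
    (P P' P'' : V → ℝ) (hP'' : IsPMF P'')
    (hPpos : ∀ x, 0 < P x) (hP'pos : ∀ x, 0 < P' x) (hP''pos : ∀ x, 0 < P'' x)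
    {α ε : ℝ} (hα : 2 < α)
    (h1 : renyiDSym α P P'' ≤ ε) (h2 : renyiDSym α P' P'' ≤ ε) :
    renyiD (α/2) P P' ≤ ((2*α - 3) / (α - 2)) * ε := by
  have htri := renyiD_weak_triangle hPpos hP'pos hP''pos (β := α / 2) (by linarith)
  rw [show 2 * (α / 2) = α by ring] at htri
  have hd1 : renyiD α P P'' ≤ ε := (le_max_left _ _).trans h1
  have hd2 : renyiD (α - 1) P'' P' ≤ ε :=
    (renyiD_mono hP'' hP''pos hP'pos (by linarith) (by linarith)).trans
      ((le_max_right _ _).trans h2)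
  have hcoeff : 0 ≤ (α / 2 - 1 / 2) / (α / 2 - 1) := div_nonneg (by linarith) (by linarith)
  calc renyiD (α / 2) P P'
      ≤ ((α / 2 - 1 / 2) / (α / 2 - 1)) * ε + ε := htri.trans (by gcongr)
    _ = ((2 * α - 3) / (α - 2)) * ε := by
        have : α - 2 ≠ 0 := by linarith
        field_simp
        ring

/-- Conversion from partition-level to user-level Rényi bounds. -/
theorem partition_to_user_conversion {V : Type*} [Fintype V] [Nonempty V]
    (P P' P'' : V → ℝ) (hP : IsPMF P) (hP' : IsPMF P') (hP'' : IsPMF P'')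
    (hPpos : ∀ x, 0 < P x) (hP'pos : ∀ x, 0 < P' x) (hP''pos : ∀ x, 0 < P'' x)
    {α ε : ℝ} (hα : 2 < α)
    (h1 : renyiDSym α P P'' ≤ ε) (h2 : renyiDSym α P' P'' ≤ ε) :
    renyiD (α/2) P P' ≤ ((2*α - 3) / (α - 2)) * ε :=
  partition_to_user_conversion_general P P' P'' hP'' hPpos hP'pos hP''pos hα h1 h2
end

section
/- Chain rule upper bound for Rényi divergence of joint distributions: let (X, Y) and (X', Y') be joint pmfs on a product of finite types Σ₁ × Σ₂ with the primed joint pmf strictly positive. Then for α > 1, D_α((X,Y)‖(X',Y')) ≤ D_α(X‖X') + max over x ∈ Σ₁ of D_α(Y|x ‖ Y'|x), where X, X' are the marginals on Σ₁ and Y|x, Y'|x are the conditional distributions on Σ₂ given first coordinate x. -/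
open Finset Real

/-- Marginal of a joint pmf on the first coordinate. -/
noncomputable def marginal {V₁ V₂ : Type*} [Fintype V₁] [Fintype V₂]
    (p : V₁ × V₂ → ℝ) : V₁ → ℝ := fun x => ∑ y, p (x, y)

/-- Conditional pmf on the second coordinate given the first. -/
noncomputable def conditional {V₁ V₂ : Type*} [Fintype V₁] [Fintype V₂]
    (p : V₁ × V₂ → ℝ) (x : V₁) : V₂ → ℝ := fun y => p (x, y) / marginal p x

/-!
Writing `p = m · c` and `p' = m' · c'` (marginal times conditional), each term
`p' (p / p') ^ α` of the joint Hellinger integral factors as `m' (m / m') ^ α · c' (c / c') ^ α`.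
Summing over the second coordinate writes the joint Hellinger integral as a sum of the conditional
ones weighted by the terms of the marginal one; bounding every conditional integral by the largest
turns this into a product bound, and `(α - 1)⁻¹ log` turns the product into a sum.
-/

noncomputable def hellingerIntegral {V : Type*} [Fintype V] (α : ℝ) (P Q : V → ℝ) : ℝ :=
  ∑ x, Q x * (P x / Q x) ^ α

section Hellinger

variable {V V₁ V₂ : Type*} [Fintype V] [Fintype V₁] [Fintype V₂]

theorem hellingerIntegral_pos {P Q : V → ℝ} (α : ℝ) (hP : IsPMF P) (hQ : ∀ x, 0 < Q x) :
    0 < hellingerIntegral α P Q := by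
  obtain ⟨x, -, hx⟩ : ∃ x ∈ univ, (0 : ℝ) < P x :=
    exists_lt_of_sum_lt (by simp [hP.2])
  refine sum_pos' (fun y _ => ?_) ⟨x, mem_univ x, ?_⟩
  · exact mul_nonneg (hQ y).le (rpow_nonneg (div_nonneg (hP.1 y) (hQ y).le) α)
  · exact mul_pos (hQ x) (rpow_pos_of_pos (div_pos hx (hQ x)) α)

theorem renyiD_le_add_of_hellingerIntegral_le_mul {α : ℝ} (hα : 1 < α)
    {P Q : V → ℝ} {P₁ Q₁ : V₁ → ℝ} {P₂ Q₂ : V₂ → ℝ}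
    (h : 0 < hellingerIntegral α P Q) (h₁ : 0 < hellingerIntegral α P₁ Q₁)
    (h₂ : 0 < hellingerIntegral α P₂ Q₂)
    (hle : hellingerIntegral α P Q ≤ hellingerIntegral α P₁ Q₁ * hellingerIntegral α P₂ Q₂) :
    renyiD α P Q ≤ renyiD α P₁ Q₁ + renyiD α P₂ Q₂ := by
  have hlog := log_le_log h hle
  rw [log_mul h₁.ne' h₂.ne'] at hlog
  have hinv : 0 ≤ (α - 1)⁻¹ := inv_nonneg.2 (by linarith)
  simp only [renyiD, ← mul_add]
  exact mul_le_mul_of_nonneg_left hlog hinv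

end Hellinger

section Conditional

variable {V₁ V₂ : Type*} [Fintype V₁] [Fintype V₂]

theorem marginal_pos [Nonempty V₂] {p : V₁ × V₂ → ℝ} (hp : ∀ z, 0 < p z) (x : V₁) :
    0 < marginal p x :=
  sum_pos (fun y _ => hp (x, y)) univ_nonempty

theorem IsPMF.marginal {p : V₁ × V₂ → ℝ} (hp : IsPMF p) : IsPMF (marginal p) :=
  ⟨fun x => sum_nonneg fun y _ => hp.1 (x, y), by rw [← hp.2, Fintype.sum_prod_type]; rfl⟩

theorem isPMF_conditional {p : V₁ × V₂ → ℝ} (hp : ∀ z, 0 ≤ p z) {x : V₁}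
    (hx : 0 < marginal p x) : IsPMF (conditional p x) :=
  ⟨fun y => div_nonneg (hp (x, y)) hx.le, by
    simp only [conditional, ← sum_div]
    exact div_self hx.ne'⟩

theorem marginal_mul_conditional {p : V₁ × V₂ → ℝ} {x : V₁} (hx : marginal p x ≠ 0) (y : V₂) :
    marginal p x * conditional p x y = p (x, y) :=
  mul_div_cancel₀ _ hx

theorem hellingerIntegral_eq_sum_mul_conditional (α : ℝ) {p p' : V₁ × V₂ → ℝ}
    (hp : ∀ z, 0 ≤ p z) (hp' : ∀ z, 0 ≤ p' z)
    (hm : ∀ x, 0 < marginal p x) (hm' : ∀ x, 0 < marginal p' x) :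
    hellingerIntegral α p p' =
      ∑ x, marginal p' x * (marginal p x / marginal p' x) ^ α *
        hellingerIntegral α (conditional p x) (conditional p' x) := by
  rw [hellingerIntegral, Fintype.sum_prod_type]
  refine sum_congr rfl fun x _ => ?_
  rw [hellingerIntegral, mul_sum]
  refine sum_congr rfl fun y _ => ?_
  have hc : 0 ≤ conditional p x y / conditional p' x y :=
    div_nonneg (div_nonneg (hp (x, y)) (hm x).le) (div_nonneg (hp' (x, y)) (hm' x).le)
  rw [← marginal_mul_conditional (hm x).ne' y, ← marginal_mul_conditional (hm' x).ne' y,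
    mul_div_mul_comm, mul_rpow (div_nonneg (hm x).le (hm' x).le) hc]
  ring

end Conditional

theorem renyi_chain_rule_bound_general {V₁ V₂ : Type*} [Fintype V₁] [Fintype V₂]
    [Nonempty V₁] [Nonempty V₂]
    (p p' : V₁ × V₂ → ℝ) (hp : IsPMF p)
    (hp'pos : ∀ z, 0 < p' z)
    (hppos : ∀ x, 0 < marginal p x)
    {α : ℝ} (hα : 1 < α) :
    renyiD α p p' ≤
      renyiD α (marginal p) (marginal p') +
        ⨆ x : V₁, renyiD α (conditional p x) (conditional p' x) := by
  set H : V₁ → ℝ := fun x => hellingerIntegral α (conditional p x) (conditional p' x)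
  obtain ⟨x₀, -, hx₀⟩ := exists_max_image univ H univ_nonempty
  have hm' := marginal_pos hp'pos
  have hc' : ∀ y, 0 < conditional p' x₀ y := fun y => div_pos (hp'pos _) (hm' x₀)
  have hle : hellingerIntegral α p p' ≤ hellingerIntegral α (marginal p) (marginal p') * H x₀ :=
    calc hellingerIntegral α p p'
        = ∑ x, marginal p' x * (marginal p x / marginal p' x) ^ α * H x :=
          hellingerIntegral_eq_sum_mul_conditional α hp.1 (fun z => (hp'pos z).le) hppos hm'
      _ ≤ ∑ x, marginal p' x * (marginal p x / marginal p' x) ^ α * H x₀ := by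
          gcongr with x
          · exact mul_nonneg (hm' x).le (rpow_nonneg (div_nonneg (hppos x).le (hm' x).le) α)
          · exact hx₀ x (mem_univ x)
      _ = hellingerIntegral α (marginal p) (marginal p') * H x₀ := (sum_mul _ _ _).symm
  calc renyiD α p p'
      ≤ renyiD α (marginal p) (marginal p') + renyiD α (conditional p x₀) (conditional p' x₀) :=
        renyiD_le_add_of_hellingerIntegral_le_mul hα (hellingerIntegral_pos α hp hp'pos)
          (hellingerIntegral_pos α hp.marginal hm')
          (hellingerIntegral_pos α (isPMF_conditional hp.1 (hppos x₀)) hc') hle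
    _ ≤ _ := by
      gcongr
      exact le_ciSup (f := fun x => renyiD α (conditional p x) (conditional p' x))
        (Set.finite_range _).bddAbove x₀

/-- Chain-rule upper bound for Rényi divergence of joint distributions:
`D_α((X,Y)‖(X',Y')) ≤ D_α(X‖X') + max_x D_α(Y|x ‖ Y'|x)`. -/
theorem renyi_chain_rule_bound {V₁ V₂ : Type*} [Fintype V₁] [Fintype V₂]
    [Nonempty V₁] [Nonempty V₂]
    (p p' : V₁ × V₂ → ℝ) (hp : IsPMF p) (hp' : IsPMF p')
    (hp'pos : ∀ z, 0 < p' z)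
    (hppos : ∀ x, 0 < marginal p x)
    {α : ℝ} (hα : 1 < α) :
    renyiD α p p' ≤
      renyiD α (marginal p) (marginal p') +
        ⨆ x : V₁, renyiD α (conditional p x) (conditional p' x) :=
  renyi_chain_rule_bound_general p p' hp hp'pos hppos hα
end

section
/- Data-processing-style bound for mixtures sharing a common component: for pmfs P, Q, R on a finite type with Q and R of full support, α > 1, and λ ∈ [0,1], D_α(λP + (1−λ)R ‖ λQ + (1−λ)R) ≤ D_α(P‖Q). -/
open Finset Real

/-!
The Hellinger integral `H_α(P‖Q) = ∑ Q (P/Q)^α` is the perspective of the convex function `t ↦ t^α`,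
hence jointly convex in `(P, Q)`. Mixing both arguments with `(R, R)` therefore gives
`H_α(mixture) ≤ λ H_α(P‖Q) + (1 - λ) H_α(R‖R) = λ H_α(P‖Q) + (1 - λ) ≤ H_α(P‖Q)`, the last step
because `H_α(P‖Q) ≥ 1` by Jensen. Since `D_α = log H_α / (α - 1)` with `α > 1`, the bound follows.
-/

theorem ConvexOn.perspective_combo_le {s : Set ℝ} {f : ℝ → ℝ} (hf : ConvexOn ℝ s f)
    {p q r t a b : ℝ} (hq : 0 < q) (ht : 0 < t) (hp : p / q ∈ s) (hr : r / t ∈ s)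
    (ha : 0 ≤ a) (hb : 0 ≤ b) (hab : a + b = 1) :
    (a * q + b * t) * f ((a * p + b * r) / (a * q + b * t))
      ≤ a * (q * f (p / q)) + b * (t * f (r / t)) := by
  have hm : 0 < a * q + b * t := convex_Ioi (0 : ℝ) hq ht ha hb hab
  have hjensen := hf.2 hp hr (div_nonneg (mul_nonneg ha hq.le) hm.le)
    (div_nonneg (mul_nonneg hb ht.le) hm.le) (by field_simp)
  have hpoint : a * q / (a * q + b * t) * (p / q) + b * t / (a * q + b * t) * (r / t)
      = (a * p + b * r) / (a * q + b * t) := by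
    field_simp
  simp only [smul_eq_mul] at hjensen
  rw [hpoint] at hjensen
  calc (a * q + b * t) * f ((a * p + b * r) / (a * q + b * t))
      ≤ (a * q + b * t) * (a * q / (a * q + b * t) * f (p / q)
          + b * t / (a * q + b * t) * f (r / t)) := mul_le_mul_of_nonneg_left hjensen hm.le
    _ = a * (q * f (p / q)) + b * (t * f (r / t)) := by field_simp

theorem mix_pos {V : Type*} {Q R : V → ℝ} {l : ℝ} (hQ : ∀ x, 0 < Q x) (hR : ∀ x, 0 < R x)
    (hl0 : 0 ≤ l) (hl1 : l ≤ 1) (x : V) :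
    0 < l * Q x + (1 - l) * R x :=
  convex_Ioi (0 : ℝ) (hQ x) (hR x) hl0 (sub_nonneg.2 hl1) (by ring)

section Mixture

variable {V : Type*} [Fintype V] {α l : ℝ} {P Q R T : V → ℝ}

theorem IsPMF.mix (hP : IsPMF P) (hR : IsPMF R) (hl0 : 0 ≤ l) (hl1 : l ≤ 1) :
    IsPMF (fun x => l * P x + (1 - l) * R x) := by
  refine ⟨fun x => ?_, ?_⟩
  · have := hP.1 x
    have := hR.1 x
    have : 0 ≤ 1 - l := sub_nonneg.2 hl1
    positivity
  · rw [sum_add_distrib, ← mul_sum, ← mul_sum, hP.2, hR.2]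
    ring

theorem hellingerIntegral_self (hR : ∀ x, 0 < R x) : hellingerIntegral α R R = ∑ x, R x :=
  sum_congr rfl fun x _ => by rw [div_self (hR x).ne', one_rpow, mul_one]

theorem one_le_hellingerIntegral (hα : 1 ≤ α) (hP : IsPMF P) (hQ : IsPMF Q)
    (hQpos : ∀ x, 0 < Q x) : 1 ≤ hellingerIntegral α P Q := by
  have hjensen := (convexOn_rpow hα).map_sum_le (t := univ) (w := Q) (p := fun x => P x / Q x)
    (fun x _ => (hQpos x).le) hQ.2 (fun x _ => Set.mem_Ici.2 (div_nonneg (hP.1 x) (hQpos x).le))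
  have hmean : ∑ x, Q x * (P x / Q x) = 1 := by
    rw [← hP.2]
    exact sum_congr rfl fun x _ => mul_div_cancel₀ _ (hQpos x).ne'
  simp only [smul_eq_mul] at hjensen
  rwa [hmean, one_rpow] at hjensen

theorem hellingerIntegral_mix_le (hα : 1 ≤ α) (hP : ∀ x, 0 ≤ P x) (hR : ∀ x, 0 ≤ R x)
    (hQ : ∀ x, 0 < Q x) (hT : ∀ x, 0 < T x) (hl0 : 0 ≤ l) (hl1 : l ≤ 1) :
    hellingerIntegral α (fun x => l * P x + (1 - l) * R x) (fun x => l * Q x + (1 - l) * T x)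
      ≤ l * hellingerIntegral α P Q + (1 - l) * hellingerIntegral α R T := by
  rw [hellingerIntegral, hellingerIntegral, hellingerIntegral, mul_sum, mul_sum, ← sum_add_distrib]
  exact sum_le_sum fun x _ => (convexOn_rpow hα).perspective_combo_le (hQ x) (hT x)
    (div_nonneg (hP x) (hQ x).le) (div_nonneg (hR x) (hT x).le) hl0 (sub_nonneg.2 hl1) (by ring)

end Mixture

theorem renyi_mixture_le_general {V : Type*} [Fintype V]
    (P Q R : V → ℝ) (hP : IsPMF P) (hQ : IsPMF Q) (hR : IsPMF R)
    (hQpos : ∀ x, 0 < Q x) (hRpos : ∀ x, 0 < R x)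
    {α : ℝ} (hα : 1 < α) {l : ℝ} (hl0 : 0 ≤ l) (hl1 : l ≤ 1) :
    renyiD α (fun x => l * P x + (1 - l) * R x) (fun x => l * Q x + (1 - l) * R x)
      ≤ renyiD α P Q := by
  have hS : 1 ≤ hellingerIntegral α P Q := one_le_hellingerIntegral hα.le hP hQ hQpos
  have hM := one_le_hellingerIntegral hα.le (hP.mix hR hl0 hl1) (hQ.mix hR hl0 hl1)
    (mix_pos hQpos hRpos hl0 hl1)
  have hMS : hellingerIntegral α (fun x => l * P x + (1 - l) * R x)
      (fun x => l * Q x + (1 - l) * R x) ≤ hellingerIntegral α P Q :=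
    calc _ ≤ l * hellingerIntegral α P Q + (1 - l) * hellingerIntegral α R R :=
          hellingerIntegral_mix_le hα.le hP.1 hR.1 hQpos hRpos hl0 hl1
      _ = l * hellingerIntegral α P Q + (1 - l) * 1 := by rw [hellingerIntegral_self hRpos, hR.2]
      _ ≤ hellingerIntegral α P Q := by nlinarith
  exact mul_le_mul_of_nonneg_left (log_le_log (zero_lt_one.trans_le hM) hMS)
    (inv_nonneg.2 (by linarith))

/-- Mixing with a common component cannot increase Rényi divergence. -/
theorem renyi_mixture_le {V : Type*} [Fintype V] [Nonempty V]
    (P Q R : V → ℝ) (hP : IsPMF P) (hQ : IsPMF Q) (hR : IsPMF R)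
    (hQpos : ∀ x, 0 < Q x) (hRpos : ∀ x, 0 < R x)
    {α : ℝ} (hα : 1 < α) {l : ℝ} (hl0 : 0 ≤ l) (hl1 : l ≤ 1) :
    renyiD α (fun x => l * P x + (1 - l) * R x) (fun x => l * Q x + (1 - l) * R x)
      ≤ renyiD α P Q :=
  renyi_mixture_le_general P Q R hP hQ hR hQpos hRpos hα hl0 hl1
end

section
/- GNMax counting upper bound: let n : Σ → ℕ be a vector of counts over a finite vocabulary Σ, let σ > 0, and let N be the arg-max of n(z) + G(z) over z ∈ Σ, where (G(z)) are i.i.d. real-valued Gaussian noise variables with a symmetric, exchangeable joint law. Then for any fixed token x ∈ Σ, P(N = x) ≤ 1 / |{z ∈ Σ : n(z) ≥ n(x)}|. -/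
/-!
Let `A y` be the set of noise vectors `g` for which `y` is the strict maximiser of `n + g`.
These events are pairwise disjoint, and when `n x ≤ n y`, composing with the transposition
`(x y)` maps `A x` into `A y`. Exchangeability of the noise therefore makes `x` the least likely
winner among `S = {z : n x ≤ n z}`, so `|S| · P(A x) ≤ ∑_{y ∈ S} P(A y) ≤ 1`.
-/

open MeasureTheory ProbabilityTheory Finset
open scoped ENNReal
open Function

namespace GNMax

variable {V : Type*}

def argmaxSet (s : V → ℝ) (y : V) : Set (V → ℝ) :=
  {g | ∀ z, z ≠ y → s z + g z < s y + g y}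

theorem measurableSet_argmaxSet [Countable V] (s : V → ℝ) (y : V) :
    MeasurableSet (argmaxSet s y) := by
  have : argmaxSet s y = ⋂ z, ⋂ _ : z ≠ y, {g : V → ℝ | s z + g z < s y + g y} := by
    ext g; simp [argmaxSet]
  rw [this]
  refine .iInter fun z => .iInter fun _ => measurableSet_lt ?_ ?_ <;> fun_prop

theorem pairwise_disjoint_argmaxSet (s : V → ℝ) : Pairwise (Disjoint on argmaxSet s) := by
  intro a b hab
  refine Set.disjoint_left.2 fun g hga hgb => ?_
  have := hga b hab.symm
  have := hgb a hab
  linarith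

theorem comp_swap_mem_argmaxSet [DecidableEq V] {s : V → ℝ} {x y : V} (hxy : s x ≤ s y)
    {g : V → ℝ} (hg : g ∘ Equiv.swap x y ∈ argmaxSet s x) : g ∈ argmaxSet s y := by
  intro z hzy
  by_cases hzx : z = x
  · subst hzx
    have := hg y (Ne.symm hzy)
    simp only [comp_apply, Equiv.swap_apply_left, Equiv.swap_apply_right] at this
    linarith
  · have := hg z hzx
    simp only [comp_apply, Equiv.swap_apply_left,
      Equiv.swap_apply_of_ne_of_ne hzx hzy] at this
    linarith

section Exchangeable

variable [Countable V] {ν : Measure (V → ℝ)}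

theorem measure_argmaxSet_mono (hν : ∀ e : Equiv.Perm V, ν.map (fun g => g ∘ e) = ν)
    {s : V → ℝ} {x y : V} (hxy : s x ≤ s y) :
    ν (argmaxSet s x) ≤ ν (argmaxSet s y) := by
  classical
  have hcomp : Measurable fun g : V → ℝ => g ∘ Equiv.swap x y := by fun_prop
  calc ν (argmaxSet s x)
      = ν.map (fun g => g ∘ Equiv.swap x y) (argmaxSet s x) := by rw [hν]
    _ = ν ((fun g => g ∘ Equiv.swap x y) ⁻¹' argmaxSet s x) :=
        Measure.map_apply hcomp (measurableSet_argmaxSet s x)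
    _ ≤ ν (argmaxSet s y) := measure_mono fun g hg => comp_swap_mem_argmaxSet hxy hg

theorem measure_argmaxSet_le_inv_card [Fintype V] [IsProbabilityMeasure ν]
    (hν : ∀ e : Equiv.Perm V, ν.map (fun g => g ∘ e) = ν) (s : V → ℝ) (x : V) :
    ν (argmaxSet s x) ≤ (#{z | s x ≤ s z} : ℝ≥0∞)⁻¹ := by
  set S : Finset V := {z | s x ≤ s z}
  rw [ENNReal.le_inv_iff_mul_le, mul_comm, ← nsmul_eq_mul]
  calc #S • ν (argmaxSet s x)
      ≤ ∑ y ∈ S, ν (argmaxSet s y) :=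
        card_nsmul_le_sum S _ _ fun y hy => measure_argmaxSet_mono hν (mem_filter.1 hy).2
    _ = ν (⋃ y ∈ S, argmaxSet s y) :=
        (measure_biUnion_finset ((pairwise_disjoint_argmaxSet s).set_pairwise _)
          fun y _ => measurableSet_argmaxSet s y).symm
    _ ≤ 1 := prob_le_one

end Exchangeable

end GNMax

open GNMax in
theorem gnmax_counting_bound_general {V : Type*} [Fintype V]
    {Ω : Type*} [MeasurableSpace Ω] (μ : Measure Ω) [IsProbabilityMeasure μ]
    (n : V → ℕ) (G : V → Ω → ℝ) (hGmeas : ∀ z, Measurable (G z))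
    (N : Ω → V)
    (hargmax : ∀ᵐ ω ∂μ, ∀ z : V, z ≠ N ω →
      (n z : ℝ) + G z ω < (n (N ω) : ℝ) + G (N ω) ω)
    (hexch : ∀ e : Equiv.Perm V,
      Measure.map (fun ω => fun z => G (e z) ω) μ =
        Measure.map (fun ω => fun z => G z ω) μ)
    (x : V) :
    μ {ω | N ω = x} ≤
      1 / ((Finset.univ.filter fun z : V => n x ≤ n z).card : ENNReal) := by
  set F : Ω → V → ℝ := fun ω z => G z ω
  have hF : Measurable F := measurable_pi_lambda _ hGmeas
  have hν : ∀ e : Equiv.Perm V, (μ.map F).map (fun g => g ∘ e) = μ.map F := fun e => by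
    rw [Measure.map_map (g := fun g : V → ℝ => g ∘ e) (by fun_prop) hF]
    exact hexch e
  have hwin : μ {ω | N ω = x} ≤ μ.map F (argmaxSet (fun z => (n z : ℝ)) x) := by
    rw [Measure.map_apply hF (measurableSet_argmaxSet _ x)]
    refine measure_mono_ae ?_
    filter_upwards [hargmax] with ω hω hNω
    exact hNω ▸ hω
  have : IsProbabilityMeasure (μ.map F) := Measure.isProbabilityMeasure_map hF.aemeasurable
  simpa only [one_div, Nat.cast_le] using
    hwin.trans (measure_argmaxSet_le_inv_card hν (fun z => (n z : ℝ)) x)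

/-- GNMax counting upper bound: if the noise variables have an exchangeable joint
law and the noisy arg-max `N` is almost surely the unique maximizer of
`n z + G z`, then `P(N = x) ≤ 1 / #{z : n z ≥ n x}`. -/
theorem gnmax_counting_bound {V : Type*} [Fintype V] [Nonempty V] [MeasurableSpace V] [MeasurableSingletonClass V]
    {Ω : Type*} [MeasurableSpace Ω] (μ : Measure Ω) [IsProbabilityMeasure μ]
    (n : V → ℕ) (G : V → Ω → ℝ) (hGmeas : ∀ z, Measurable (G z))
    (N : Ω → V) (hNmeas : Measurable N)
    (hargmax : ∀ᵐ ω ∂μ, ∀ z : V, z ≠ N ω →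
      (n z : ℝ) + G z ω < (n (N ω) : ℝ) + G (N ω) ω)
    (hexch : ∀ e : Equiv.Perm V,
      Measure.map (fun ω => fun z => G (e z) ω) μ =
        Measure.map (fun ω => fun z => G z ω) μ)
    (x : V) :
    μ {ω | N ω = x} ≤
      1 / ((Finset.univ.filter fun z : V => n x ≤ n z).card : ENNReal) :=
  gnmax_counting_bound_general μ n G hGmeas N hargmax hexch x
end

section
/- RDP-to-DP conversion: if pmfs P and Q on a finite type with full support satisfy D_α(P‖Q) ≤ ε for some α > 1 and ε ≥ 0, then for every δ ∈ (0,1) and every subset S of the type, P(S) ≤ exp(ε + log(1/δ)/(α−1)) · Q(S) + δ. -/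
open Finset Real

/-!
Hölder's inequality with exponents `α` and `α / (α - 1)`, applied to `P = Q · (P / Q)` on `S`,
gives `P(S) ≤ Q(S) ^ (1 - 1/α) · M ^ (1/α)` with `M = ∑ Q (P / Q) ^ α ≤ exp ((α - 1) ε)`,
that is `P(S) ≤ (e^ε Q(S)) ^ (1 - 1/α)`. It remains to bound `t ^ (1 - 1/α)` by
`δ ^ (-1/(α-1)) t + δ`: either it is at most `δ`, or `t ^ (1 - 1/α) > δ` forces
`t ^ (-1/α) ≤ δ ^ (-1/(α-1))`.
-/

section RenyiMoment

variable {V : Type*} [Fintype V] {P Q : V → ℝ}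

noncomputable def renyiMoment (α : ℝ) (P Q : V → ℝ) : ℝ :=
  ∑ x, Q x * (P x / Q x) ^ α

theorem renyiMoment_nonneg (hP : ∀ x, 0 ≤ P x) (hQ : ∀ x, 0 ≤ Q x) (α : ℝ) :
    0 ≤ renyiMoment α P Q :=
  sum_nonneg fun x _ => mul_nonneg (hQ x) (rpow_nonneg (div_nonneg (hP x) (hQ x)) α)

theorem renyiMoment_le_exp_of_renyiD_le {α ε : ℝ} (hα : 1 < α) (h : renyiD α P Q ≤ ε) :
    renyiMoment α P Q ≤ exp ((α - 1) * ε) := by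
  have hlog : log (renyiMoment α P Q) ≤ (α - 1) * ε := (inv_mul_le_iff₀ (sub_pos.2 hα)).1 h
  exact (le_exp_log _).trans (exp_le_exp.2 hlog)

theorem sum_le_rpow_mul_renyiMoment_rpow (hP : ∀ x, 0 ≤ P x) (hQ : ∀ x, 0 < Q x) {α : ℝ}
    (hα : 1 ≤ α) (S : Finset V) :
    ∑ x ∈ S, P x ≤ (∑ x ∈ S, Q x) ^ (1 - α⁻¹) * renyiMoment α P Q ^ α⁻¹ := by
  have hterm : ∀ x, 0 ≤ Q x * (P x / Q x) ^ α := fun x =>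
    mul_nonneg (hQ x).le (rpow_nonneg (div_nonneg (hP x) (hQ x).le) α)
  have hholder := inner_le_weight_mul_Lp_of_nonneg S hα Q (fun x => P x / Q x)
    (fun x => (hQ x).le) (fun x => div_nonneg (hP x) (hQ x).le)
  simp only [mul_div_cancel₀ _ (hQ _).ne'] at hholder
  refine hholder.trans
    (mul_le_mul_of_nonneg_left ?_ (rpow_nonneg (sum_nonneg fun x _ => (hQ x).le) _))
  exact rpow_le_rpow (sum_nonneg fun x _ => hterm x)
    (sum_le_sum_of_subset_of_nonneg (subset_univ S) fun x _ _ => hterm x) (by positivity)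

theorem sum_le_rpow_of_renyiD_le (hP : ∀ x, 0 ≤ P x) (hQ : ∀ x, 0 < Q x) {α ε : ℝ}
    (hα : 1 < α) (h : renyiD α P Q ≤ ε) (S : Finset V) :
    ∑ x ∈ S, P x ≤ (exp ε * ∑ x ∈ S, Q x) ^ (1 - α⁻¹) := by
  have hQS : 0 ≤ ∑ x ∈ S, Q x := sum_nonneg fun x _ => (hQ x).le
  have hexp : exp ((α - 1) * ε) ^ α⁻¹ = exp ε ^ (1 - α⁻¹) := by
    rw [← exp_mul, ← exp_mul]
    congr 1
    field_simp
  calc ∑ x ∈ S, P x ≤ (∑ x ∈ S, Q x) ^ (1 - α⁻¹) * renyiMoment α P Q ^ α⁻¹ :=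
        sum_le_rpow_mul_renyiMoment_rpow hP hQ hα.le S
    _ ≤ (∑ x ∈ S, Q x) ^ (1 - α⁻¹) * exp ((α - 1) * ε) ^ α⁻¹ := by
        gcongr
        · exact renyiMoment_nonneg hP (fun x => (hQ x).le) α
        · exact renyiMoment_le_exp_of_renyiD_le hα h
    _ = (exp ε * ∑ x ∈ S, Q x) ^ (1 - α⁻¹) := by
        rw [hexp, mul_comm, mul_rpow (exp_pos ε).le hQS]

end RenyiMoment

theorem rpow_one_sub_inv_le_mul_add {t δ α : ℝ} (ht : 0 ≤ t) (hδ : 0 < δ) (hα : 1 < α) :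
    t ^ (1 - α⁻¹) ≤ δ⁻¹ ^ (α - 1)⁻¹ * t + δ := by
  rcases le_or_gt (t ^ (1 - α⁻¹)) δ with hsmall | hlarge
  · have := mul_nonneg (rpow_nonneg (inv_nonneg.2 hδ.le) (α - 1)⁻¹) ht
    linarith
  have hp : 0 < 1 - α⁻¹ := sub_pos.2 (inv_lt_one_of_one_lt₀ hα)
  have htpos : 0 < t := by
    rcases ht.eq_or_lt with rfl | htpos
    · rw [zero_rpow hp.ne'] at hlarge
      linarith
    · exact htpos
  have hδt : δ ^ (α - 1)⁻¹ ≤ t ^ α⁻¹ := by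
    have hexp : (1 - α⁻¹) * (α - 1)⁻¹ = α⁻¹ := by
      have : α - 1 ≠ 0 := (sub_pos.2 hα).ne'
      field_simp
    calc δ ^ (α - 1)⁻¹ ≤ (t ^ (1 - α⁻¹)) ^ (α - 1)⁻¹ :=
          rpow_le_rpow hδ.le hlarge.le (inv_nonneg.2 (sub_pos.2 hα).le)
      _ = t ^ α⁻¹ := by rw [← rpow_mul htpos.le, hexp]
  calc t ^ (1 - α⁻¹) = t ^ (-α⁻¹) * t := by
        rw [sub_eq_neg_add, rpow_add htpos, rpow_one]
    _ ≤ δ⁻¹ ^ (α - 1)⁻¹ * t := by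
        gcongr
        rw [rpow_neg htpos.le, inv_rpow hδ.le]
        exact inv_anti₀ (rpow_pos_of_pos hδ _) hδt
    _ ≤ δ⁻¹ ^ (α - 1)⁻¹ * t + δ := le_add_of_nonneg_right hδ.le

theorem rdp_to_dp_general {V : Type*} [Fintype V]
    (P Q : V → ℝ)
    (hPpos : ∀ x, 0 < P x) (hQpos : ∀ x, 0 < Q x)
    {α ε : ℝ} (hα : 1 < α) (hRDP : renyiD α P Q ≤ ε)
    {δ : ℝ} (hδ0 : 0 < δ) (S : Finset V) :
    ∑ x ∈ S, P x ≤ Real.exp (ε + Real.log (1/δ) / (α - 1)) * ∑ x ∈ S, Q x + δ := by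
  have hconst : exp (ε + log (1 / δ) / (α - 1)) = δ⁻¹ ^ (α - 1)⁻¹ * exp ε := by
    rw [rpow_def_of_pos (inv_pos.2 hδ0), exp_add, one_div, div_eq_mul_inv, mul_comm]
  calc ∑ x ∈ S, P x ≤ (exp ε * ∑ x ∈ S, Q x) ^ (1 - α⁻¹) :=
        sum_le_rpow_of_renyiD_le (fun x => (hPpos x).le) hQpos hα hRDP S
    _ ≤ δ⁻¹ ^ (α - 1)⁻¹ * (exp ε * ∑ x ∈ S, Q x) + δ :=
        rpow_one_sub_inv_le_mul_add
          (mul_nonneg (exp_pos ε).le (sum_nonneg fun x _ => (hQpos x).le)) hδ0 hα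
    _ = exp (ε + log (1 / δ) / (α - 1)) * ∑ x ∈ S, Q x + δ := by
        rw [hconst, mul_assoc]

/-- RDP-to-approximate-DP conversion. -/
theorem rdp_to_dp {V : Type*} [Fintype V] [Nonempty V]
    (P Q : V → ℝ) (hP : IsPMF P) (hQ : IsPMF Q)
    (hPpos : ∀ x, 0 < P x) (hQpos : ∀ x, 0 < Q x)
    {α ε : ℝ} (hα : 1 < α) (hε : 0 ≤ ε) (hRDP : renyiD α P Q ≤ ε)
    {δ : ℝ} (hδ0 : 0 < δ) (hδ1 : δ < 1) (S : Finset V) :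
    ∑ x ∈ S, P x ≤ Real.exp (ε + Real.log (1/δ) / (α - 1)) * ∑ x ∈ S, Q x + δ :=
  rdp_to_dp_general P Q hPpos hQpos hα hRDP hδ0 S
end
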